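/- arXiv:math/9809095 — 6 statements merged into one kernel-verified Lean document; each statement's English description precedes it below -/
import Mathlib

section
/- In the multivision game on tuples v ∈ ℕ^{k+1} (moves: pick h with v_h > 0, set v_h := v_h − 1, and increase coordinates after h arbitrarily), the set of P-positions is exactly the set of tuples all of whose coordinates are even. -/
/-- A multivision move from `v` to `w`. -/
def MultivisionMove {k : ℕ} (v w : Fin (k + 1) → ℕ) : Prop :=
  ∃ h : Fin (k + 1), 0 < v h ∧ w h = v h - 1 ∧
    (∀ i : Fin (k + 1), i < h → w i = v i) ∧ (∀ i : Fin (k + 1), h < i → v i ≤ w i)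

/-- For any predicate `P` satisfying the normal-play fixpoint condition
(`u` is a P-position iff every follower fails `P`), the P-positions of
multivision are exactly the tuples with all coordinates even. -/
theorem multivision_P_positions_are_even (k : ℕ)
    (P : (Fin (k + 1) → ℕ) → Prop)
    (hP : ∀ v : Fin (k + 1) → ℕ, P v ↔ ∀ w, MultivisionMove v w → ¬ P w) :
    ∀ v : Fin (k + 1) → ℕ, P v ↔ ∀ i : Fin (k + 1), Even (v i) := by
  classical
  -- The "all even" predicate satisfies the same fixpoint condition.
  have key : ∀ v : Fin (k + 1) → ℕ,
      (∀ i, Even (v i)) ↔ ∀ w, MultivisionMove v w → ¬ ∀ i, Even (w i) := by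
    intro v
    constructor
    · rintro hv w ⟨h, hpos, hwh, -, -⟩ hw
      have h1 := hv h
      have h2 := hw h
      rw [Nat.even_iff] at h1 h2
      omega
    · intro hmoves
      by_contra hodd
      push_neg at hodd
      obtain ⟨j, hj⟩ := hodd
      set s : Finset (Fin (k + 1)) := Finset.univ.filter (fun i => ¬ Even (v i)) with hs
      have hne : s.Nonempty :=
        ⟨j, by simp only [hs, Finset.mem_filter, Finset.mem_univ, true_and]; exact hj⟩
      set h := s.min' hne with hh
      have hhodd : ¬ Even (v h) := by
        have := Finset.mem_filter.mp (s.min'_mem hne)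
        exact this.2
      have hmin : ∀ i : Fin (k + 1), i < h → Even (v i) := by
        intro i hi
        by_contra hie
        exact absurd (s.min'_le i (by
          simp only [hs, Finset.mem_filter, Finset.mem_univ, true_and]; exact hie)) (not_le.mpr hi)
      have hpos : 0 < v h := Nat.pos_of_ne_zero (fun h0 => hhodd (by simp [h0]))
      set w : Fin (k + 1) → ℕ := fun i =>
        if i < h then v i else if i = h then v h - 1 else v i + v i % 2 with hw
      have hmove : MultivisionMove v w := by
        refine ⟨h, hpos, by simp [hw], fun i hi => by simp [hw, hi], fun i hi => ?_⟩
        have h1 : ¬ i < h := not_lt.mpr hi.le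
        have h2 : i ≠ h := hi.ne'
        simp [hw, h1, h2]
      refine hmoves w hmove (fun i => ?_)
      rcases lt_trichotomy i h with hlt | heq | hgt
      · simpa [hw, hlt] using hmin i hlt
      · rw [Nat.even_iff] at hhodd ⊢
        simp only [hw, heq, lt_irrefl, if_false, if_pos rfl, if_true]
        omega
      · have h1 : ¬ i < h := not_lt.mpr hgt.le
        have h2 : i ≠ h := hgt.ne'
        simp only [hw, h1, h2, if_false]
        rw [Nat.even_iff]
        omega
  -- Moves decrease the lexicographic order, which is well-founded.
  have wf : WellFounded (fun w v : Fin (k + 1) → ℕ => MultivisionMove v w) := by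
    have hwf : WellFounded ((· < ·) : Lex (Fin (k + 1) → ℕ) → Lex (Fin (k + 1) → ℕ) → Prop) :=
      IsWellFounded.wf
    have hwf' : WellFounded (fun w v : Fin (k + 1) → ℕ => toLex w < toLex v) :=
      InvImage.wf toLex hwf
    refine Subrelation.wf ?_ hwf'
    rintro w v ⟨h, hpos, hwh, hlt, -⟩
    refine ⟨h, fun j hj => hlt j hj, ?_⟩
    show w h < v h
    omega
  intro v
  induction v using wf.induction with
  | _ v ih =>
    rw [hP, key]
    constructor
    · intro H w hw hwev
      exact H w hw ((ih w hw).mpr hwev)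
    · intro H w hw hwP
      exact H w hw ((ih w hw).mp hwP)
end

section
/- In the multivision game on tuples v ∈ ℕ^{k+1}, from any tuple with some odd coordinate there exists a move to a tuple all of whose coordinates are even; and from any tuple with all coordinates even, every move produces a tuple with at least one odd coordinate. -/
/-- From a tuple with an odd coordinate there is a move to an all-even tuple,
and from an all-even tuple every move produces a tuple with an odd coordinate. -/
theorem multivision_parity_moves (k : ℕ) (v : Fin (k + 1) → ℕ) :
    ((∃ i : Fin (k + 1), Odd (v i)) →
      ∃ w : Fin (k + 1) → ℕ, MultivisionMove v w ∧ ∀ i, Even (w i)) ∧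
    ((∀ i : Fin (k + 1), Even (v i)) →
      ∀ w : Fin (k + 1) → ℕ, MultivisionMove v w → ∃ i, Odd (w i)) := by
  classical
  constructor
  · rintro ⟨i0, hi0⟩
    have hne : {i : Fin (k+1) | Odd (v i)}.Nonempty := ⟨i0, hi0⟩
    obtain ⟨h, hh, hmin⟩ := Set.exists_min_image _ id (Set.toFinite _) hne
    simp only [Set.mem_setOf_eq, id] at hh hmin
    refine ⟨fun i => if i < h then v i else if i = h then v h - 1
        else if Even (v i) then v i else v i + 1, ⟨h, hh.pos, ?_, ?_, ?_⟩, ?_⟩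
    · simp
    · intro i hi; simp [hi]
    · intro i hi
      have h1 : ¬ i < h := not_lt.2 hi.le
      have h2 : i ≠ h := hi.ne'
      simp only [h1, h2, if_false]
      split <;> omega
    · intro i
      rcases lt_trichotomy i h with hlt | heq | hgt
      · simp only [hlt, if_true]
        by_contra hodd
        rw [Nat.not_even_iff_odd] at hodd
        exact absurd (hmin i hodd) (not_le.2 hlt)
      · simp only [heq, lt_irrefl, if_false, if_true]
        exact Nat.Odd.sub_odd hh odd_one
      · have h1 : ¬ i < h := not_lt.2 hgt.le
        have h2 : i ≠ h := hgt.ne'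
        simp only [h1, h2, if_false]
        split
        next he => exact he
        next he =>
          rw [Nat.not_even_iff_odd] at he
          exact he.add_one
  · rintro hev w ⟨h, hpos, hwh, -, -⟩
    exact ⟨h, hwh ▸ Nat.Even.sub_odd hpos (hev h) odd_one⟩
end

section
/- The set of P-positions of the K-multivision game on ℕ^{k+1} is exactly the set of tuples all of whose coordinates are divisible by K. -/
/-- A `K`-multivision move from `v` to `w`. -/
def KMultivisionMove (K : ℕ) {k : ℕ} (v w : Fin (k + 1) → ℕ) : Prop :=
  ∃ h : Fin (k + 1), ∃ s : ℕ, 1 ≤ s ∧ s < K ∧ s ≤ v h ∧ w h = v h - s ∧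
    (∀ i : Fin (k + 1), i < h → w i = v i) ∧ (∀ i : Fin (k + 1), h < i → v i ≤ w i)

theorem KMultivisionMove.lex_lt {K k : ℕ} {v w : Fin (k + 1) → ℕ}
    (hm : KMultivisionMove K v w) : toLex w < toLex v := by
  obtain ⟨h, s, hs1, _, hsv, hwh, hlt, _⟩ := hm
  refine ⟨h, fun j hj => hlt j hj, ?_⟩
  show w h < v h
  rw [hwh]; omega

/-- For any predicate `P` satisfying the normal-play fixpoint condition, the
P-positions of `K`-multivision are exactly the tuples with all coordinates
divisible by `K`. -/
theorem Kmultivision_P_positions (K k : ℕ) (hK : 2 ≤ K)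
    (P : (Fin (k + 1) → ℕ) → Prop)
    (hP : ∀ v : Fin (k + 1) → ℕ, P v ↔ ∀ w, KMultivisionMove K v w → ¬ P w) :
    ∀ v : Fin (k + 1) → ℕ, P v ↔ ∀ i : Fin (k + 1), K ∣ v i := by
  have hK0 : 0 < K := by omega
  suffices H : ∀ v : Lex (Fin (k + 1) → ℕ),
      P (ofLex v) ↔ ∀ i : Fin (k + 1), K ∣ ofLex v i by
    intro v; exact H (toLex v)
  intro v
  induction v using WellFoundedLT.induction with
  | _ v IH =>
  have IH' : ∀ w : Fin (k + 1) → ℕ, KMultivisionMove K (ofLex v) w →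
      (P w ↔ ∀ i : Fin (k + 1), K ∣ w i) := by
    intro w hm
    exact IH (toLex w) hm.lex_lt
  constructor
  · -- P v → all divisible
    intro hPv
    by_contra hnd
    push_neg at hnd
    set S : Set (Fin (k + 1)) := {i | ¬ K ∣ ofLex v i} with hS
    have hne : S.Nonempty := hnd
    set h : Fin (k + 1) := wellFounded_lt.min S hne with hdef
    have hhS : ¬ K ∣ ofLex v h := wellFounded_lt.min_mem S hne
    have hmin : ∀ j : Fin (k + 1), j < h → K ∣ ofLex v j := by
      intro j hj
      by_contra hjS
      exact wellFounded_lt.not_lt_min S hjS hj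
    -- construct a move to an all-divisible position
    set s : ℕ := ofLex v h % K with hsdef
    have hs1 : 1 ≤ s := by
      rcases Nat.eq_zero_or_pos s with h0 | h1
      · exact absurd (Nat.dvd_of_mod_eq_zero h0) hhS
      · exact h1
    have hsK : s < K := Nat.mod_lt _ hK0
    have hsv : s ≤ ofLex v h := Nat.mod_le _ _
    set w : Fin (k + 1) → ℕ := fun i =>
      if i < h then ofLex v i else if i = h then ofLex v h - s
      else K * (ofLex v i / K + 1) with hwdef
    have hmove : KMultivisionMove K (ofLex v) w := by
      refine ⟨h, s, hs1, hsK, hsv, ?_, ?_, ?_⟩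
      · simp [hwdef]
      · intro i hi; simp [hwdef, hi]
      · intro i hi
        have h1 : ¬ i < h := not_lt.2 hi.le
        have h2 : i ≠ h := ne_of_gt hi
        simp only [hwdef, if_neg h1, if_neg h2]
        have hdm := (Nat.div_add_mod (ofLex v i) K).symm
        have hml : ofLex v i % K < K := Nat.mod_lt _ hK0
        calc ofLex v i = K * (ofLex v i / K) + ofLex v i % K := hdm
          _ ≤ K * (ofLex v i / K) + K := by omega
          _ = K * (ofLex v i / K + 1) := by ring
    have hwdvd : ∀ i : Fin (k + 1), K ∣ w i := by
      intro i
      rcases lt_trichotomy i h with hi | hi | hi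
      · simpa [hwdef, hi] using hmin i hi
      · have h1 : ¬ i < h := by simp [hi]
        simp only [hwdef, if_neg h1, if_pos hi]
        have := Nat.div_add_mod (ofLex v h) K
        exact ⟨ofLex v h / K, by omega⟩
      · have h1 : ¬ i < h := not_lt.2 hi.le
        have h2 : i ≠ h := ne_of_gt hi
        simp only [hwdef, if_neg h1, if_neg h2]
        exact Dvd.intro _ rfl
    have hPw : P w := (IH' w hmove).2 hwdvd
    exact (hP (ofLex v)).1 hPv w hmove hPw
  · -- all divisible → P v
    intro hdvd
    rw [hP]
    intro w hm hPw
    obtain ⟨h, s, hs1, hsK, hsv, hwh, _, _⟩ := hm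
    have hwd : K ∣ w h := ((IH' w ⟨h, s, hs1, hsK, hsv, hwh, ‹_›, ‹_›⟩).1 hPw) h
    have hvd : K ∣ ofLex v h := hdvd h
    have : K ∣ s := by
      have : ofLex v h - w h = s := by omega
      exact this ▸ Nat.dvd_sub hvd hwd
    have := Nat.le_of_dvd (by omega) this
    omega
end

section
/- For any tuple v ∈ ℕ^{k+1} with k ≥ 1 such that some coordinate v_h with h < k is positive, and for any natural number r, there exists a play (sequence of legal multivision moves) starting at v of length at least r. In particular the game tree from v has unbounded depth even though every individual play is finite. -/
/-- If some coordinate before the last one is positive (`k ≥ 1`), then for every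
`r` there is a play from `v` of length at least `r`. -/
theorem multivision_play_can_be_prolonged (k : ℕ) (hk : 1 ≤ k)
    (v : Fin (k + 1) → ℕ) (h : Fin (k + 1)) (hh : (h : ℕ) < k) (hv : 0 < v h)
    (r : ℕ) :
    ∃ f : ℕ → (Fin (k + 1) → ℕ), f 0 = v ∧
      ∀ n : ℕ, n < r → MultivisionMove (f n) (f (n + 1)) := by
  set L : Fin (k + 1) := Fin.last k with hL
  have hhL : h < L := by
    simp only [Fin.lt_def, hL, Fin.val_last]; exact hh
  refine ⟨fun n => if n = 0 then v else fun i =>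
      if i < h then v i else if i = h then v h - 1
      else if i = L then v i + (r - (n - 1)) else v i, rfl, ?_⟩
  intro n hn
  rcases Nat.eq_zero_or_pos n with rfl | hnpos
  · -- first move, at h
    refine ⟨h, hv, ?_, ?_, ?_⟩
    · simp [lt_irrefl]
    · intro i hi; simp [hi]
    · intro i hi
      have h1 : ¬ i < h := not_lt.mpr hi.le
      have h2 : i ≠ h := hi.ne'
      simp only [if_neg (by omega : ¬ (0:ℕ)+1 = 0), h1, h2, if_false]
      split_ifs <;> omega
  · -- subsequent moves, at L
    have hnz : n ≠ 0 := hnpos.ne'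
    have hLh : ¬ L < h := not_lt.mpr hhL.le
    have hLne : L ≠ h := hhL.ne'
    refine ⟨L, ?_, ?_, ?_, ?_⟩
    · simp only [if_neg hnz, if_neg hLh, if_neg hLne]
      split_ifs <;> omega
    · simp only [if_neg hnz, if_neg (by omega : ¬ n+1 = 0), if_neg hLh, if_neg hLne,
        if_pos rfl]
      split_ifs <;> omega
    · intro i hi
      have h2 : i ≠ L := hi.ne
      simp only [if_neg hnz, if_neg (by omega : ¬ n+1 = 0), if_neg h2]
    · intro i hi
      exact absurd (Fin.le_last i) (not_le.mpr hi)
end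

section
/- In the multivision game on ℕ^{k+1} with k ≥ 1, from any position v with all coordinates even and some coordinate v_h > 0 with h < k, for every r there is a move by the opponent followed by a response to a position with all coordinates even whose last coordinate exceeds r. Hence the winning player can maintain the P-position invariant while making the last coordinate arbitrarily large, so play from v can be prolonged beyond any bound even by the winner. -/
/-- From an all-even position with a positive coordinate before the last one,
for every `r` there is an opponent move followed by a response to an all-even
position whose last coordinate exceeds `r`. -/
theorem multivision_winner_can_prolong (k : ℕ) (hk : 1 ≤ k)
    (v : Fin (k + 1) → ℕ) (hev : ∀ i : Fin (k + 1), Even (v i))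
    (h : Fin (k + 1)) (hh : (h : ℕ) < k) (hv : 0 < v h) (r : ℕ) :
    ∃ w u : Fin (k + 1) → ℕ, MultivisionMove v w ∧ MultivisionMove w u ∧
      (∀ i : Fin (k + 1), Even (u i)) ∧ r < u (Fin.last k) := by
  obtain ⟨m, hm⟩ := hev h
  have hvh2 : 2 ≤ v h := by omega
  have hne : h ≠ Fin.last k := by
    intro he; rw [he] at hh; simp [Fin.last] at hh
  set w : Fin (k + 1) → ℕ := Function.update v h (v h - 1) with hw
  set u : Fin (k + 1) → ℕ :=
    Function.update (Function.update v h (v h - 2)) (Fin.last k)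
      (v (Fin.last k) + 2 * (r + 1)) with hu
  have hwh : w h = v h - 1 := Function.update_self _ _ _
  have hwne : ∀ i, i ≠ h → w i = v i := fun i hi => Function.update_of_ne hi _ _
  have huh : u h = v h - 2 := by
    rw [hu, Function.update_of_ne hne, Function.update_self]
  have hulast : u (Fin.last k) = v (Fin.last k) + 2 * (r + 1) :=
    Function.update_self _ _ _
  have hune : ∀ i, i ≠ h → i ≠ Fin.last k → u i = v i := fun i hi hl => by
    rw [hu, Function.update_of_ne hl, Function.update_of_ne hi]
  refine ⟨w, u, ⟨h, hv, hwh, fun i hi => hwne i (ne_of_lt hi),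
      fun i hi => ?_⟩, ⟨h, ?_, ?_, fun i hi => ?_, fun i hi => ?_⟩,
      fun i => ?_, ?_⟩
  · rw [hwne i (ne_of_gt hi)]
  · rw [hwh]; omega
  · rw [huh, hwh]; omega
  · rw [hwne i (ne_of_lt hi), hune i (ne_of_lt hi)]
    intro he
    exact absurd (he ▸ hi) (not_lt.2 (Fin.le_last h))
  · by_cases hl : i = Fin.last k
    · subst hl; rw [hulast, hwne _ hne.symm]; omega
    · rw [hune i (ne_of_gt hi) hl, hwne i (ne_of_gt hi)]
  · by_cases hih : i = h
    · subst hih; rw [huh]; exact ⟨m - 1, by omega⟩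
    · by_cases hl : i = Fin.last k
      · subst hl; rw [hulast]
        obtain ⟨n, hn⟩ := hev (Fin.last k); exact ⟨n + r + 1, by omega⟩
      · rw [hune i hih hl]; exact hev i
  · rw [hulast]; omega
end

section
/- In the multivision game on ℕ^{k+1}, if the starting tuple has some odd coordinate then the first player has a winning strategy, and if all coordinates are even then the second player has a winning strategy; exactly one of the players has a winning strategy from each position. -/
/-- Given the normal-play partition `P` (previous player wins) of the multivision
game, the next player wins from any tuple with an odd coordinate, the previous
player wins from any all-even tuple, and exactly one player wins from each position. -/
theorem multivision_winning_strategy (k : ℕ)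
    (P : (Fin (k + 1) → ℕ) → Prop)
    (hP : ∀ v : Fin (k + 1) → ℕ, P v ↔ ∀ w, MultivisionMove v w → ¬ P w) :
    ∀ v : Fin (k + 1) → ℕ,
      ((∃ i : Fin (k + 1), Odd (v i)) → ¬ P v) ∧
      ((∀ i : Fin (k + 1), Even (v i)) → P v) ∧
      Xor' (P v) (¬ P v) := by
  have wf : WellFounded (Pi.Lex (· < ·) (@fun _ => ((· < ·) : ℕ → ℕ → Prop))) :=
    Pi.Lex.wellFounded (ι := Fin (k+1)) (· < ·) (fun _ => Nat.lt_wfRel.wf)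
  suffices H : ∀ v : Fin (k + 1) → ℕ, P v ↔ ∀ i, Even (v i) by
    intro v
    refine ⟨?_, fun h => (H v).mpr h, ?_⟩
    · rintro ⟨i, hi⟩ hPv
      exact (Nat.not_even_iff_odd.mpr hi) ((H v).mp hPv i)
    · by_cases h : P v
      · exact Or.inl ⟨h, not_not_intro h⟩
      · exact Or.inr ⟨h, h⟩
  intro v
  induction v using wf.induction with
  | _ v IH =>
  constructor
  · -- P v → all even
    intro hPv
    by_contra hne
    push_neg at hne
    obtain ⟨i, hi⟩ := hne
    -- take the least index with odd coordinate
    have hnonempty : (Finset.univ.filter (fun j => ¬ Even (v j))).Nonempty :=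
      ⟨i, by simp only [Finset.mem_filter, Finset.mem_univ, true_and]; exact hi⟩
    set h := (Finset.univ.filter (fun j => ¬ Even (v j))).min' hnonempty with hh
    have hodd : ¬ Even (v h) :=
      (Finset.mem_filter.mp (Finset.min'_mem _ hnonempty)).2
    have hmin : ∀ j, j < h → Even (v j) := by
      intro j hj
      by_contra hje
      exact absurd (Finset.min'_le _ j (by simp only [Finset.mem_filter, Finset.mem_univ, true_and]; exact hje)) (not_le.mpr hj)
    have hvh : 0 < v h := by
      rcases Nat.eq_zero_or_pos (v h) with h0 | h0
      · exact absurd (h0 ▸ Even.zero) hodd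
      · exact h0
    -- construct the move to an all-even position
    set w : Fin (k+1) → ℕ := fun j =>
      if j < h then v j else if j = h then v h - 1 else v j + v j % 2 with hw
    have hmove : MultivisionMove v w := by
      refine ⟨h, hvh, ?_, ?_, ?_⟩
      · simp [hw]
      · intro j hj; simp [hw, hj]
      · intro j hj
        have h1 : ¬ j < h := not_lt.mpr hj.le
        have h2 : j ≠ h := hj.ne'
        simp [hw, h1, h2]
    have hweven : ∀ j, Even (w j) := by
      intro j
      rcases lt_trichotomy j h with hj | hj | hj
      · simpa [hw, hj] using hmin j hj
      · rw [hj]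
        have hwh' : w h = v h - 1 := by simp [hw]
        rw [hwh', Nat.even_iff]
        rw [Nat.even_iff] at hodd
        omega
      · have h1 : ¬ j < h := not_lt.mpr hj.le
        have h2 : j ≠ h := hj.ne'
        simp only [hw, if_neg h1, if_neg h2]
        rw [Nat.even_iff]
        omega
    have hlex : Pi.Lex (· < ·) (@fun _ => ((· < ·) : ℕ → ℕ → Prop)) w v := by
      refine ⟨h, fun j hj => by simp [hw, hj], ?_⟩
      have hwh' : w h = v h - 1 := by simp [hw]
      rw [hwh']
      omega
    have hPw : P w := (IH w hlex).mpr hweven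
    exact (hP v).mp hPv w hmove hPw
  · -- all even → P v
    intro heven
    rw [hP v]
    rintro w ⟨h, hvh, hwh, hbefore, hafter⟩ hPw
    have hlex : Pi.Lex (· < ·) (@fun _ => ((· < ·) : ℕ → ℕ → Prop)) w v :=
      ⟨h, fun j hj => hbefore j hj, by omega⟩
    have := (IH w hlex).mp hPw h
    rw [hwh, Nat.even_iff] at this
    have := heven h
    rw [Nat.even_iff] at this
    omega
end
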